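/- arXiv:1205.1780 — 5 statements merged into one kernel-verified Lean document; each statement's English description precedes it below -/
import Mathlib

section
/- Let g : [0,δ/2) → ℝ satisfy 0 < g(x) < x for all x ∈ (0,δ/2), and suppose (xₙ) is a sequence in (0,δ/2) with x₁ > 0 and xₙ₊₁ ∈ (g(xₙ), g(xₙ) + (xₙ − g(xₙ))/(n+1)) for each n. If moreover g(x) = x − β(x)² for a nondecreasing continuous function β:[0,δ/2)→[0,∞) which is strictly positive on (0,δ/2), then (xₙ) is strictly decreasing and converges to 0. -/
theorem stmt1 (δ : ℝ) (β g : ℝ → ℝ) (x : ℕ → ℝ)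
    (hδ : 0 < δ)
    (hβcont : ContinuousOn β (Set.Ico 0 (δ / 2)))
    (hβmono : MonotoneOn β (Set.Ico 0 (δ / 2)))
    (hβ0 : β 0 = 0)
    (hβpos : ∀ t ∈ Set.Ioo 0 (δ / 2), 0 < β t)
    (hg : ∀ t, g t = t - (β t) ^ 2)
    (hgbound : ∀ t ∈ Set.Ioo 0 (δ / 2), 0 < g t ∧ g t < t)
    (hx : ∀ n, 1 ≤ n → x n ∈ Set.Ioo 0 (δ / 2))
    (hx1 : 0 < x 1)
    (hstep : ∀ n, 1 ≤ n →
      x (n + 1) ∈ Set.Ioo (g (x n)) (g (x n) + (x n - g (x n)) / (n + 1))) :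
    (∀ n, 1 ≤ n → x (n + 1) < x n) ∧
      Filter.Tendsto x Filter.atTop (nhds 0) := by
  have hstep' : ∀ n, 1 ≤ n → x (n + 1) ≤ x n - (β (x n)) ^ 2 / 2 := by
    intro n hn
    have h := (hstep n hn).2
    have hg' := hg (x n)
    have hβ := hβpos (x n) (hx n hn)
    have hn1 : (1 : ℝ) ≤ n := by exact_mod_cast hn
    have ha : x n - g (x n) = (β (x n)) ^ 2 := by rw [hg']; ring
    have hdiv : (x n - g (x n)) / (n + 1) ≤ (x n - g (x n)) / 2 := by
      gcongr
      · rw [ha]; positivity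
      · linarith
    have : x (n + 1) < g (x n) + (x n - g (x n)) / 2 := by linarith
    rw [ha] at this
    rw [hg'] at this
    linarith
  have hdec : ∀ n, 1 ≤ n → x (n + 1) < x n := by
    intro n hn
    have hβ := hβpos (x n) (hx n hn)
    have := hstep' n hn
    nlinarith
  have hanti : ∀ m n : ℕ, 1 ≤ m → m ≤ n → x n ≤ x m := by
    intro m n hm hmn
    induction n with
    | zero => omega
    | succ n ih =>
      rcases Nat.lt_or_ge m (n + 1) with h | h
      · have hn1 : 1 ≤ n := by omega
        have := hdec n hn1
        have := ih (by omega)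
        linarith
      · have : m = n + 1 := by omega
        rw [this]
  refine ⟨hdec, ?_⟩
  rw [Metric.tendsto_atTop]
  intro ε hε
  have hx1δ := (hx 1 le_rfl).2
  set t := min (ε / 2) (x 1 / 2) with ht
  have ht0 : 0 < t := lt_min (by linarith) (by linarith)
  have htδ : t < δ / 2 := lt_of_le_of_lt (min_le_right _ _) (by linarith)
  have hc : 0 < β t := hβpos t ⟨ht0, htδ⟩
  have hexists : ∃ N, 1 ≤ N ∧ x N < t := by
    by_contra hcon
    push_neg at hcon
    have hkey : ∀ k : ℕ, x (1 + k) ≤ x 1 - k * ((β t) ^ 2 / 2) := by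
      intro k
      induction k with
      | zero => simp
      | succ k ih =>
        have hn : 1 ≤ 1 + k := by omega
        have h1 := hstep' (1 + k) hn
        have hmem := hx (1 + k) hn
        have h2 : β t ≤ β (x (1 + k)) :=
          hβmono ⟨ht0.le, htδ⟩ ⟨hmem.1.le, hmem.2⟩ (hcon _ hn)
        have h3 : (β t) ^ 2 ≤ (β (x (1 + k))) ^ 2 := by nlinarith
        have heq : 1 + (k + 1) = 1 + k + 1 := by ring
        rw [heq]
        push_cast
        linarith
    obtain ⟨k, hk⟩ := exists_nat_gt (x 1 / ((β t) ^ 2 / 2))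
    have hb : (0 : ℝ) < (β t) ^ 2 / 2 := by positivity
    have h1 := hkey k
    have hpos := (hx (1 + k) (by omega)).1
    rw [div_lt_iff₀ hb] at hk
    linarith
  obtain ⟨N, hN1, hNt⟩ := hexists
  refine ⟨N, fun n hn => ?_⟩
  have hle : x n ≤ x N := hanti N n hN1 hn
  have hpos : 0 < x n := (hx n (le_trans hN1 hn)).1
  rw [Real.dist_eq, sub_zero, abs_of_pos hpos]
  have : t ≤ ε / 2 := min_le_left _ _
  linarith
end

section
/- Let g ∈ G₃ be defined on [0,δ). For every increasing continuous function f:[0,δ)→(0,∞) with f(0)=0 and f(x)<x on (0,δ), there exists a strictly decreasing sequence (xₙ) of positive reals tending to 0 such that: for every set M ⊆ ℝ and every x ∈ ℝ, if there exists n₀ ∈ ℕ such that for all n > n₀, x + xₙ ∈ M or x + xₙ₊₁ ∈ M, then M is not right-[f]-porous at x. -/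
/-- `M` is right-`[f]`-porous at `x`. -/
def RightPorousAt (f : ℝ → ℝ) (M : Set ℝ) (x : ℝ) : Prop :=
  ∃ a : ℕ → ℝ, StrictAnti a ∧ (∀ n, 0 < a n) ∧
    Filter.Tendsto a Filter.atTop (nhds 0) ∧
    ∀ n, Set.Ioo (x + f (a n)) (x + a n) ∩ M = ∅

/-- Auxiliary two-step recursion: pairs `(x n, x (n+1))`. -/
noncomputable def seqAux (f : ℝ → ℝ) (δ : ℝ) : ℕ → ℝ × ℝ
  | 0 => (δ/2, (δ/2 + f (δ/2))/2)
  | n+1 => ((seqAux f δ n).2, ((seqAux f δ n).2 + f (seqAux f δ n).1)/2)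

theorem stmt2 (δ : ℝ) (f : ℝ → ℝ)
    (hδ : 0 < δ)
    (hmono : StrictMonoOn f (Set.Ico 0 δ))
    (hcont : ContinuousOn f (Set.Ico 0 δ))
    (hf0 : f 0 = 0)
    (hfpos : ∀ x ∈ Set.Ioo 0 δ, 0 < f x)
    (hflt : ∀ x ∈ Set.Ioo 0 δ, f x < x) :
    ∃ x : ℕ → ℝ, StrictAnti x ∧ (∀ n, 0 < x n) ∧
      Filter.Tendsto x Filter.atTop (nhds 0) ∧
      ∀ (M : Set ℝ) (y : ℝ),
        (∃ n₀ : ℕ, ∀ n > n₀, y + x n ∈ M ∨ y + x (n + 1) ∈ M) →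
        ¬ RightPorousAt f M y := by
  classical
  set x : ℕ → ℝ := fun n => (seqAux f δ n).1 with hxdef
  have hx0 : x 0 = δ/2 := rfl
  have hx1 : x 1 = (δ/2 + f (δ/2))/2 := rfl
  have hrec : ∀ n, x (n+2) = (x (n+1) + f (x n))/2 := fun n => by
    simp only [hxdef, seqAux]
  have key : ∀ n, 0 < x n ∧ x n < δ ∧ x (n+1) < x n ∧ f (x n) < x (n+1) := by
    intro n
    induction n with
    | zero =>
      have h1 : (δ/2) ∈ Set.Ioo 0 δ := ⟨by linarith, by linarith⟩
      have h2 := hflt _ h1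
      have h3 := hfpos _ h1
      refine ⟨?_, ?_, ?_, ?_⟩ <;> simp only [hx0, hx1] <;> linarith
    | succ n ih =>
      obtain ⟨ih1, ih2, ih3, ih4⟩ := ih
      have hmem : x n ∈ Set.Ioo 0 δ := ⟨ih1, ih2⟩
      have hfp := hfpos _ hmem
      have pos1 : 0 < x (n+1) := lt_trans hfp ih4
      have hlt1 : x (n+1) < δ := ih3.trans ih2
      have hstep : x (n+2) < x (n+1) := by rw [hrec]; linarith
      have hfm : f (x (n+1)) < f (x n) :=
        hmono ⟨pos1.le, hlt1⟩ ⟨ih1.le, ih2⟩ ih3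
      have hfl : f (x n) < x (n+2) := by rw [hrec]; linarith
      exact ⟨pos1, hlt1, hstep, hfm.trans hfl⟩
  have hpos : ∀ n, 0 < x n := fun n => (key n).1
  have hanti : StrictAnti x := strictAnti_nat_of_succ_lt fun n => (key n).2.2.1
  have hmemx : ∀ n, x n ∈ Set.Ico 0 δ := fun n => ⟨(hpos n).le, (key n).2.1⟩
  -- the sequence tends to its infimum L, and L = 0
  have hbdd : BddBelow (Set.range x) := ⟨0, by rintro _ ⟨n, rfl⟩; exact (hpos n).le⟩
  have hten := tendsto_atTop_ciInf hanti.antitone hbdd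
  set L := ⨅ n, x n with hLdef
  have hL0 : 0 ≤ L := le_ciInf fun n => (hpos n).le
  have hLδ : L < δ := lt_of_le_of_lt (ciInf_le hbdd 0) (by rw [hx0]; linarith)
  have hfc : Filter.Tendsto (fun n => f (x n)) Filter.atTop (nhds (f L)) := by
    have hc := (hcont L ⟨hL0, hLδ⟩).tendsto
    exact hc.comp (tendsto_nhdsWithin_iff.mpr ⟨hten, Filter.Eventually.of_forall hmemx⟩)
  have h2 : Filter.Tendsto (fun n => x (n+2)) Filter.atTop (nhds L) :=
    hten.comp (Filter.tendsto_add_atTop_nat 2)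
  have h3 : Filter.Tendsto (fun n => (x (n+1) + f (x n))/2) Filter.atTop
      (nhds ((L + f L)/2)) :=
    ((hten.comp (Filter.tendsto_add_atTop_nat 1)).add hfc).div_const 2
  have hLeq : L = (L + f L)/2 := by
    simp only [hrec] at h2
    exact tendsto_nhds_unique h2 h3
  have hLf : f L = L := by linarith
  have hLzero : L = 0 := by
    by_contra h
    have hLpos : 0 < L := lt_of_le_of_ne hL0 (Ne.symm h)
    exact absurd hLf (ne_of_lt (hflt L ⟨hLpos, hLδ⟩))
  rw [hLzero] at hten
  refine ⟨x, hanti, hpos, hten, ?_⟩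
  rintro M y ⟨n₀, hM⟩ ⟨a, haanti, hapos, haten, hadisj⟩
  -- pick m with a m < min (x (n₀+1)) δ
  have hminpos : (0:ℝ) < min (x (n₀+1)) δ := lt_min (hpos _) hδ
  have hsmall : ∀ᶠ m in Filter.atTop, a m < min (x (n₀+1)) δ :=
    haten.eventually (gt_mem_nhds hminpos)
  obtain ⟨m, hm⟩ := hsmall.exists
  set A := a m with hAdef
  have hA0 : 0 < A := hapos m
  have hAx : A < x (n₀+1) := lt_of_lt_of_le hm (min_le_left _ _)
  have hAδ : A < δ := lt_of_lt_of_le hm (min_le_right _ _)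
  -- least n with x n < A
  have hex : ∃ n, x n < A := (hten.eventually (gt_mem_nhds hA0)).exists
  set n := Nat.find hex with hndef
  have hn : x n < A := Nat.find_spec hex
  have hngt : n₀ + 1 < n := by
    by_contra h
    push_neg at h
    have := hanti.antitone h
    linarith
  obtain ⟨k, hkn⟩ : ∃ k, n = k + 1 := ⟨n - 1, by omega⟩
  rw [hkn] at hn hngt
  have hkltn : k < n := by omega
  have hk : A ≤ x k := le_of_not_gt (Nat.find_min hex (hndef ▸ hkltn))
  have hfA : f A ≤ f (x k) :=
    hmono.monotoneOn ⟨hA0.le, hAδ⟩ (hmemx k) hk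
  have hfk2 : f (x k) < x (k+2) := by
    have h4 := (key k).2.2.2
    rw [hrec]; linarith
  have hk21 : x (k+2) < x (k+1) := (key (k+1)).2.2.1
  -- both x (k+1) and x (k+2) lie in (f A, A)
  have hb1 : f A < x (k+1) ∧ x (k+1) < A := ⟨lt_of_le_of_lt hfA (hfk2.trans hk21), hn⟩
  have hb2 : f A < x (k+2) ∧ x (k+2) < A := ⟨lt_of_le_of_lt hfA hfk2, hk21.trans hn⟩
  have hdis := hadisj m
  rw [Set.eq_empty_iff_forall_notMem] at hdis
  rcases hM (k+1) (by omega) with hmem | hmem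
  · exact hdis (y + x (k+1)) ⟨⟨by linarith [hb1.1], by linarith [hb1.2]⟩, hmem⟩
  · exact hdis (y + x (k+2)) ⟨⟨by linarith [hb2.1], by linarith [hb2.2]⟩, hmem⟩
end

section
/- Let (dₙ), (Dₙ), and multi-digits bₙ be as in the multi-digit expansion. If x, y ∈ (0,1) satisfy |x − y| < 10^{−D_{(n+1)²+1}} and for y there exist indices k₁, k₂ ∈ (n², (n+1)²] with b_{k₁}(y) = 10^{d_{k₁}} − 1 and b_{k₂}(y) ≠ 10^{d_{k₂}} − 1, then b_k(x) = b_k(y) for all k ≤ n². -/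
/-- The `k`-th decimal digit of `x` (convention: the expansion ending in zeros). -/
noncomputable def digit (x : ℝ) (k : ℕ) : ℕ := (⌊x * 10 ^ k⌋ % 10).toNat

/-- `Dsum d n = d 1 + ⋯ + d n`, with `Dsum d 0 = 0`. -/
def Dsum (d : ℕ → ℕ) (n : ℕ) : ℕ := ∑ k ∈ Finset.Icc 1 n, d k

/-- The `n`-th multi-digit of `x` with respect to the sequence `d`. -/
noncomputable def mdigit (d : ℕ → ℕ) (n : ℕ) (x : ℝ) : ℕ :=
  ∑ k ∈ Finset.Icc (Dsum d (n - 1) + 1) (Dsum d n), 10 ^ (Dsum d n - k) * digit x k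

/-- The number of maximal multi-digits of `x` in the block `(n², (n+1)²]`. -/
noncomputable def Ccount (d : ℕ → ℕ) (x : ℝ) (n : ℕ) : ℕ :=
  ((Finset.Ioc (n ^ 2) ((n + 1) ^ 2)).filter
    (fun k => mdigit d k x = 10 ^ (d k) - 1)).card

/-!
The `i`-th digit of `y` is read off `⌊y * 10 ^ i⌋`, and this floor does not move under a
perturbation of size `10 ^ (i - N)` as long as `Int.fract (y * 10 ^ i)` keeps that distance from
both `0` and `1`. A nonzero digit of `y` at a position in `(i, N]` keeps it away from `0`, a digit
other than `9` at such a position keeps it away from `1`. The maximal multi-digit `b_{k₁}(y)`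
consists of nines and the non-maximal `b_{k₂}(y)` contains a digit other than `9`, all at positions
in `(D_{n²}, D_{(n+1)²}]`; so with `N = D_{(n+1)²+1}` every digit of `x` up to position `D_{n²}`
agrees with that of `y`.
-/

open Finset

lemma Dsum_succ (d : ℕ → ℕ) (n : ℕ) : Dsum d (n + 1) = Dsum d n + d (n + 1) :=
  sum_Icc_succ_top (by omega) d

lemma Dsum_monotone (d : ℕ → ℕ) : Monotone (Dsum d) := fun _ _ hab =>
  sum_le_sum_of_subset (Icc_subset_Icc_right hab)

lemma Dsum_strictMono {d : ℕ → ℕ} (hd : ∀ n, 1 ≤ n → 0 < d n) : StrictMono (Dsum d) :=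
  strictMono_nat_of_lt_succ fun n => by
    rw [Dsum_succ]
    exact Nat.lt_add_of_pos_right (hd (n + 1) (by omega))

lemma Dsum_sub_one_add {d : ℕ → ℕ} {k : ℕ} (hk : 1 ≤ k) : Dsum d (k - 1) + d k = Dsum d k := by
  obtain ⟨k, rfl⟩ := Nat.exists_eq_add_of_le' hk
  rw [Nat.add_sub_cancel, Dsum_succ]

lemma digit_le_nine (x : ℝ) (k : ℕ) : digit x k ≤ 9 := by
  have := Int.emod_nonneg ⌊x * 10 ^ k⌋ (by norm_num : (10 : ℤ) ≠ 0)
  have := Int.emod_lt_of_pos ⌊x * 10 ^ k⌋ (by norm_num : (0 : ℤ) < 10)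
  unfold digit
  omega

lemma digit_fract_mul_pow (y : ℝ) (i : ℕ) {k : ℕ} (hk : 0 < k) :
    digit (Int.fract (y * 10 ^ i)) k = digit y (i + k) := by
  have hfloor : ⌊Int.fract (y * 10 ^ i) * 10 ^ k⌋ = ⌊y * 10 ^ (i + k)⌋ - ⌊y * 10 ^ i⌋ * 10 ^ k := by
    rw [Int.fract, sub_mul, pow_add, ← mul_assoc, ← Int.floor_sub_intCast]
    push_cast
    rfl
  obtain ⟨k, rfl⟩ := Nat.exists_eq_add_of_lt hk
  rw [digit, digit, hfloor, pow_succ, ← mul_assoc, Int.sub_mul_emod_self_right]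

lemma one_div_pow_le_of_digit_ne_zero {z : ℝ} (hz : 0 ≤ z) {k : ℕ} (h : digit z k ≠ 0) :
    1 / 10 ^ k ≤ z := by
  have hnonneg : 0 ≤ ⌊z * 10 ^ k⌋ := Int.floor_nonneg.mpr (by positivity)
  have hne : ⌊z * 10 ^ k⌋ ≠ 0 := by rintro h0; simp [digit, h0] at h
  rw [div_le_iff₀ (by positivity), ← Int.floor_pos]
  omega

lemma lt_one_sub_one_div_pow_of_digit_ne_nine {z : ℝ} (hz : z < 1) {k : ℕ} (hk : 0 < k)
    (h : digit z k ≠ 9) : z < 1 - 1 / 10 ^ k := by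
  have hpos : (0 : ℝ) < 10 ^ k := by positivity
  have hlt : ⌊z * 10 ^ k⌋ < 10 ^ k := by
    rw [Int.floor_lt]; push_cast; nlinarith
  have hne : ⌊z * 10 ^ k⌋ ≠ 10 ^ k - 1 := by
    rintro h9
    obtain ⟨k, rfl⟩ := Nat.exists_eq_add_of_lt hk
    have : (1 : ℤ) ≤ 10 ^ k := one_le_pow₀ (by norm_num)
    apply h
    rw [digit, h9, pow_succ]
    omega
  have hle : ⌊z * 10 ^ k⌋ + 2 ≤ (10 : ℤ) ^ k := by omega
  have hle' : (⌊z * 10 ^ k⌋ : ℝ) + 2 ≤ 10 ^ k := by exact_mod_cast hle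
  have := Int.lt_floor_add_one (z * 10 ^ k)
  rw [one_sub_div hpos.ne', lt_div_iff₀ hpos]
  linarith

lemma floor_eq_floor_of_abs_sub_lt {u v ε : ℝ} (h : |u - v| < ε)
    (h₁ : ε ≤ Int.fract v) (h₂ : Int.fract v ≤ 1 - ε) : ⌊u⌋ = ⌊v⌋ := by
  have hv := Int.floor_add_fract v
  rw [abs_sub_lt_iff] at h
  rw [Int.floor_eq_iff]
  constructor <;> linarith

lemma digit_eq_of_abs_sub_lt {x y : ℝ} {i m₁ m₂ N : ℕ} (hi₁ : i < m₁) (hm₁N : m₁ ≤ N)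
    (hi₂ : i < m₂) (hm₂N : m₂ ≤ N) (hm₁ : digit y m₁ ≠ 0) (hm₂ : digit y m₂ ≠ 9)
    (hxy : |x - y| < 10 ^ (-(N : ℤ))) : digit x i = digit y i := by
  set ε : ℝ := 1 / 10 ^ (N - i)
  have hε_le : ∀ {m}, m ≤ N → ε ≤ 1 / 10 ^ (m - i) := fun hm =>
    one_div_le_one_div_of_le (by positivity) (pow_le_pow_right₀ (by norm_num) (by omega))
  have hclose : |x * 10 ^ i - y * 10 ^ i| < ε := by
    have hscale : (10 : ℝ) ^ (-(N : ℤ)) * 10 ^ i = 1 / 10 ^ (N - i) := by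
      rw [one_div, ← zpow_natCast, ← zpow_natCast, ← zpow_neg, ← zpow_add₀ (by norm_num)]
      congr 1
      push_cast [Nat.cast_sub (hi₁.trans_le hm₁N).le]
      ring
    have h10 : (0 : ℝ) < 10 ^ i := by positivity
    rw [← sub_mul, abs_mul, abs_of_pos h10]
    exact (mul_lt_mul_of_pos_right hxy h10).trans_eq hscale
  have hlower : ε ≤ Int.fract (y * 10 ^ i) := by
    refine (hε_le hm₁N).trans (one_div_pow_le_of_digit_ne_zero (Int.fract_nonneg _) ?_)
    rwa [digit_fract_mul_pow y i (Nat.sub_pos_of_lt hi₁), Nat.add_sub_cancel' hi₁.le]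
  have hupper : Int.fract (y * 10 ^ i) ≤ 1 - ε := by
    have hk₂ := Nat.sub_pos_of_lt hi₂
    refine (lt_one_sub_one_div_pow_of_digit_ne_nine (Int.fract_lt_one _) hk₂ ?_).le.trans
      (by linarith [hε_le hm₂N])
    rwa [digit_fract_mul_pow y i (Nat.sub_pos_of_lt hi₂), Nat.add_sub_cancel' hi₂.le]
  rw [digit, digit, floor_eq_floor_of_abs_sub_lt hclose hlower hupper]

lemma sum_Icc_pow_mul_emod_ten (c : ℕ → ℕ) {a b : ℕ} (hab : a < b) :
    (∑ i ∈ Icc (a + 1) b, 10 ^ (b - i) * c i) % 10 = c b % 10 := by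
  obtain ⟨b, rfl⟩ := Nat.exists_eq_add_of_lt hab
  rw [sum_Icc_succ_top (by omega), Nat.sub_self, pow_zero, one_mul]
  have : 10 ∣ ∑ i ∈ Icc (a + 1) (a + b), 10 ^ (a + b + 1 - i) * c i :=
    dvd_sum fun i hi => (dvd_pow_self 10 (by simp at hi; omega)).mul_right _
  omega

lemma sum_Icc_pow_mul_nine {a b : ℕ} (hab : a ≤ b) :
    ∑ i ∈ Icc (a + 1) b, 10 ^ (b - i) * 9 = 10 ^ (b - a) - 1 := by
  induction b, hab using Nat.le_induction with
  | base => simp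
  | succ b hab ih =>
    have hshift : ∀ i ∈ Icc (a + 1) b, 10 ^ (b + 1 - i) * 9 = 10 * (10 ^ (b - i) * 9) := by
      intro i hi
      rw [mem_Icc] at hi
      rw [Nat.sub_add_comm hi.2, pow_succ]
      ring
    have : 1 ≤ 10 ^ (b - a) := Nat.one_le_pow _ _ (by norm_num)
    rw [sum_Icc_succ_top (by omega), sum_congr rfl hshift, ← mul_sum, ih,
      Nat.sub_add_comm hab, pow_succ, Nat.sub_self, pow_zero]
    omega

lemma mdigit_congr {d : ℕ → ℕ} {k : ℕ} {x y : ℝ}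
    (h : ∀ i ≤ Dsum d k, digit x i = digit y i) : mdigit d k x = mdigit d k y :=
  sum_congr rfl fun i hi => by rw [h i (mem_Icc.mp hi).2]

lemma digit_Dsum_eq_nine_of_mdigit_eq {d : ℕ → ℕ} {k : ℕ} {y : ℝ} (hk : 1 ≤ k) (hd : 0 < d k)
    (h : mdigit d k y = 10 ^ d k - 1) : digit y (Dsum d k) = 9 := by
  have hmod := sum_Icc_pow_mul_emod_ten (digit y) (a := Dsum d (k - 1)) (b := Dsum d k)
    (by rw [← Dsum_sub_one_add hk]; omega)
  rw [← mdigit, h] at hmod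
  obtain ⟨e, he⟩ := Nat.exists_eq_add_of_lt hd
  have : 1 ≤ 10 ^ e := Nat.one_le_pow _ _ (by norm_num)
  have := digit_le_nine y (Dsum d k)
  rw [he, zero_add, pow_succ] at hmod
  omega

lemma exists_digit_ne_nine_of_mdigit_ne {d : ℕ → ℕ} {k : ℕ} {y : ℝ} (hk : 1 ≤ k)
    (h : mdigit d k y ≠ 10 ^ d k - 1) :
    ∃ m, Dsum d (k - 1) < m ∧ m ≤ Dsum d k ∧ digit y m ≠ 9 := by
  by_contra! hall
  apply h
  rw [mdigit, sum_congr rfl fun i hi => by rw [hall i (mem_Icc.mp hi).1 (mem_Icc.mp hi).2],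
    sum_Icc_pow_mul_nine (Dsum_monotone d (Nat.sub_le k 1)), ← Dsum_sub_one_add hk,
    Nat.add_sub_cancel_left]

theorem stmt9_general (d : ℕ → ℕ) (hdpos : ∀ n, 1 ≤ n → 0 < d n)
    (n : ℕ) (x y : ℝ)
    (hclose : |x - y| < (10 : ℝ) ^ (-(Dsum d ((n + 1) ^ 2 + 1) : ℤ)))
    (k₁ k₂ : ℕ)
    (hk₁ : n ^ 2 < k₁ ∧ k₁ ≤ (n + 1) ^ 2)
    (hk₂ : n ^ 2 < k₂ ∧ k₂ ≤ (n + 1) ^ 2)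
    (h₁ : mdigit d k₁ y = 10 ^ (d k₁) - 1)
    (h₂ : mdigit d k₂ y ≠ 10 ^ (d k₂) - 1) :
    ∀ k, 1 ≤ k → k ≤ n ^ 2 → mdigit d k x = mdigit d k y := by
  intro k _ hkn
  have hD := Dsum_strictMono hdpos
  have hm₁ : digit y (Dsum d k₁) = 9 :=
    digit_Dsum_eq_nine_of_mdigit_eq (by omega) (hdpos k₁ (by omega)) h₁
  obtain ⟨m₂, hm₂lo, hm₂hi, hm₂⟩ := exists_digit_ne_nine_of_mdigit_ne (by omega) h₂
  refine mdigit_congr fun i hi =>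
    digit_eq_of_abs_sub_lt (m₁ := Dsum d k₁) ?_ ?_ ?_ ?_ (by omega) hm₂ hclose
  · exact (hi.trans (Dsum_monotone d hkn)).trans_lt (hD hk₁.1)
  · exact (hD (by omega : k₁ < _)).le
  · exact (hi.trans (Dsum_monotone d (by omega : k ≤ k₂ - 1))).trans_lt hm₂lo
  · exact hm₂hi.trans (hD (by omega : k₂ < _)).le

theorem stmt9 (d : ℕ → ℕ) (hdpos : ∀ n, 1 ≤ n → 0 < d n)
    (hdmono : ∀ n, 1 ≤ n → d n < d (n + 1))
    (n : ℕ) (x y : ℝ) (hx : x ∈ Set.Ioo (0 : ℝ) 1) (hy : y ∈ Set.Ioo (0 : ℝ) 1)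
    (hclose : |x - y| < (10 : ℝ) ^ (-(Dsum d ((n + 1) ^ 2 + 1) : ℤ)))
    (k₁ k₂ : ℕ)
    (hk₁ : n ^ 2 < k₁ ∧ k₁ ≤ (n + 1) ^ 2)
    (hk₂ : n ^ 2 < k₂ ∧ k₂ ≤ (n + 1) ^ 2)
    (h₁ : mdigit d k₁ y = 10 ^ (d k₁) - 1)
    (h₂ : mdigit d k₂ y ≠ 10 ^ (d k₂) - 1) :
    ∀ k, 1 ≤ k → k ≤ n ^ 2 → mdigit d k x = mdigit d k y :=
  stmt9_general d hdpos n x y hclose k₁ k₂ hk₁ hk₂ h₁ h₂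
end

section
/- Let (dₙ) be a strictly increasing sequence of positive integers with associated multi-digit expansion bₙ, let ε > 0, 1/2 < α < 1, and N ∈ ℕ with N > max{(1+ε)^{1/α}, ε^{1/(α−1)}}. For fixed B₁,…,B_{N²} with B_k ∈ {0,…,10^{d_k}−1}, define A := {x ∈ (0,1) : b_k(x) = B_k for k ≤ N², and for all n ≥ N, 1 − ε/n^α ≤ C(x,n)/(2n+1) < 1}, where C(x,n) := #{k : n² < k ≤ (n+1)², b_k(x) = 10^{d_k} − 1}. Then A is a closed subset of ℝ. -/
/-!
A point `x` of the closure of `A` cannot be a decimal fraction `c / 10 ^ t`: just right of such a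
point all digits after the `t`-th are `0` and just left of it they are all `9`, so every `y` near
`x` has `C(y, n) ∈ {0, 2n + 1}` for a given `n ≥ t`, whereas `ε / n ^ α → 0` forces
`0 < C(y, n) < 2n + 1` for points `y` of `A` once `n` is large. Away from decimal fractions every
digit is locally constant, and each condition defining `A` involves only finitely many digits, so
it passes from nearby points of `A` to `x`.
-/

open Filter Topology Finset

lemma sum_Icc_pow_ten_mul_nine (a m : ℕ) :
    ∑ j ∈ Icc (a + 1) (a + m), 10 ^ (a + m - j) * 9 = 10 ^ m - 1 := by
  have h : (∑ i ∈ range m, 10 ^ i) * 9 + 1 = 10 ^ m := geom_sum_mul_add 9 m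
  rw [← Ico_add_one_right_eq_Icc, sum_Ico_reflect (fun i => 10 ^ i * 9) _ le_rfl, Nat.sub_self,
    show a + m + 1 - (a + 1) = m by omega, Nat.Ico_zero_eq_range, ← sum_mul]
  omega

lemma le_Dsum {d : ℕ → ℕ} (hdpos : ∀ n, 1 ≤ n → 0 < d n) (m : ℕ) : m ≤ Dsum d m := by
  simpa [Dsum] using
    sum_le_sum fun k (hk : k ∈ Icc 1 m) => Nat.succ_le_of_lt (hdpos k (mem_Icc.mp hk).1)

lemma Dsum_eq_Dsum_sub_one_add (d : ℕ → ℕ) {k : ℕ} (hk : 1 ≤ k) :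
    Dsum d k = Dsum d (k - 1) + d k := by
  obtain ⟨j, rfl⟩ := Nat.exists_eq_add_of_le' hk
  simp only [Dsum, Nat.add_sub_cancel, sum_Icc_succ_top (Nat.le_add_left 1 j)]

lemma eventually_floor_mul_pow_eq {x : ℝ} {j : ℕ} (hx : ∀ m : ℤ, x * 10 ^ j ≠ m) :
    ∀ᶠ y in 𝓝 x, ⌊y * 10 ^ j⌋ = ⌊x * 10 ^ j⌋ := by
  have hlt : (⌊x * 10 ^ j⌋ : ℝ) < x * 10 ^ j :=
    (Int.floor_le _).lt_of_ne (hx _).symm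
  have hcont : ContinuousAt (fun y : ℝ => y * 10 ^ j) x := by fun_prop
  filter_upwards [hcont.eventually_mem (Ioo_mem_nhds hlt (Int.lt_floor_add_one _))] with y hy
  exact Int.floor_eq_iff.mpr ⟨hy.1.le, hy.2⟩

lemma eventually_floor_mul_pow_of_eq_int {x : ℝ} {j : ℕ} {m : ℤ} (hm : x * 10 ^ j = m) :
    ∀ᶠ y in 𝓝 x, (x ≤ y → ⌊y * 10 ^ j⌋ = m) ∧ (y < x → ⌊y * 10 ^ j⌋ = m - 1) := by
  have hcont : ContinuousAt (fun y : ℝ => y * 10 ^ j) x := by fun_prop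
  have hmem : x * 10 ^ j ∈ Set.Ioo ((m : ℝ) - 1) (m + 1) := by
    rw [hm]; constructor <;> linarith
  filter_upwards [hcont.eventually_mem (Ioo_mem_nhds hmem.1 hmem.2)] with y hy
  refine ⟨fun hxy => Int.floor_eq_iff.mpr ⟨?_, hy.2⟩, fun hyx => ?_⟩
  · rw [← hm]; gcongr
  · rw [Int.floor_eq_iff]
    push_cast
    refine ⟨hy.1.le, ?_⟩
    rw [sub_add_cancel, ← hm]
    gcongr

lemma digit_eventually_eq {x : ℝ} {j : ℕ} (hx : ∀ m : ℤ, x * 10 ^ j ≠ m) :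
    ∀ᶠ y in 𝓝 x, digit y j = digit x j := by
  filter_upwards [eventually_floor_mul_pow_eq hx] with y hy
  rw [digit, digit, hy]

lemma eventually_digit_of_mul_pow_eq_int {x : ℝ} {t j : ℕ} {c : ℤ} (hc : x * 10 ^ t = c)
    (htj : t < j) : ∀ᶠ y in 𝓝 x, (x ≤ y → digit y j = 0) ∧ (y < x → digit y j = 9) := by
  have hm : x * 10 ^ j = ((10 * (c * 10 ^ (j - t - 1)) : ℤ) : ℝ) := by
    obtain ⟨i, rfl⟩ := Nat.exists_eq_add_of_lt htj
    rw [show t + i + 1 - t - 1 = i by omega, add_assoc, pow_add, ← mul_assoc, hc]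
    push_cast
    ring
  filter_upwards [eventually_floor_mul_pow_of_eq_int hm] with y hy
  refine ⟨fun hxy => ?_, fun hyx => ?_⟩
  · simp only [digit, hy.1 hxy]
    omega
  · simp only [digit, hy.2 hyx]
    omega

lemma mdigit_eventually_eq (d : ℕ → ℕ) (k : ℕ) {x : ℝ}
    (hx : ∀ (j : ℕ) (m : ℤ), x * 10 ^ j ≠ m) : ∀ᶠ y in 𝓝 x, mdigit d k y = mdigit d k x := by
  filter_upwards [(eventually_all_finset _).2 fun j _ => digit_eventually_eq (hx j)] with y hy
  exact sum_congr rfl fun j hj => by rw [hy j hj]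

lemma Ccount_eventually_eq (d : ℕ → ℕ) (n : ℕ) {x : ℝ}
    (hx : ∀ (j : ℕ) (m : ℤ), x * 10 ^ j ≠ m) : ∀ᶠ y in 𝓝 x, Ccount d y n = Ccount d x n := by
  filter_upwards [(eventually_all_finset _).2 fun k _ => mdigit_eventually_eq d k hx] with y hy
  exact congrArg card (filter_congr fun k hk => by rw [hy k hk])

lemma mdigit_eq_zero {d : ℕ → ℕ} {k : ℕ} {y : ℝ}
    (h : ∀ j ∈ Icc (Dsum d (k - 1) + 1) (Dsum d k), digit y j = 0) : mdigit d k y = 0 :=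
  sum_eq_zero fun j hj => by rw [h j hj, mul_zero]

lemma mdigit_eq_pow_sub_one {d : ℕ → ℕ} {k : ℕ} (hk : 1 ≤ k) {y : ℝ}
    (h : ∀ j ∈ Icc (Dsum d (k - 1) + 1) (Dsum d k), digit y j = 9) :
    mdigit d k y = 10 ^ d k - 1 := by
  rw [mdigit, sum_congr rfl fun j hj => by rw [h j hj], Dsum_eq_Dsum_sub_one_add d hk,
    sum_Icc_pow_ten_mul_nine]

lemma Ccount_eventually_eq_zero_or_eq {d : ℕ → ℕ} (hdpos : ∀ n, 1 ≤ n → 0 < d n)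
    {x : ℝ} {t n : ℕ} {c : ℤ} (hc : x * 10 ^ t = c) (htn : t ≤ n) :
    ∀ᶠ y in 𝓝 x, Ccount d y n = 0 ∨ Ccount d y n = 2 * n + 1 := by
  have hpos : ∀ k ∈ Ioc (n ^ 2) ((n + 1) ^ 2), ∀ j ∈ Icc (Dsum d (k - 1) + 1) (Dsum d k),
      t < j := by
    intro k hk j hj
    have := le_Dsum hdpos (k - 1)
    have := Nat.le_self_pow two_ne_zero n
    simp only [mem_Ioc, mem_Icc] at hk hj
    omega
  have hdigits : ∀ᶠ y in 𝓝 x, ∀ k ∈ Ioc (n ^ 2) ((n + 1) ^ 2),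
      ∀ j ∈ Icc (Dsum d (k - 1) + 1) (Dsum d k),
        (x ≤ y → digit y j = 0) ∧ (y < x → digit y j = 9) :=
    (eventually_all_finset _).2 fun k hk => (eventually_all_finset _).2 fun j hj =>
      eventually_digit_of_mul_pow_eq_int hc (hpos k hk j hj)
  filter_upwards [hdigits] with y hy
  rcases le_or_gt x y with hxy | hyx
  · refine .inl (card_eq_zero.2 (filter_eq_empty_iff.2 fun k hk hmax => ?_))
    rw [mdigit_eq_zero fun j hj => (hy k hk j hj).1 hxy] at hmax
    have := Nat.one_lt_pow (hdpos k (Nat.one_le_of_lt (mem_Ioc.1 hk).1)).ne'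
      (by norm_num : 1 < 10)
    omega
  · refine .inr ?_
    rw [Ccount, filter_true_of_mem fun k hk => mdigit_eq_pow_sub_one
      (Nat.one_le_of_lt (mem_Ioc.1 hk).1) fun j hj => (hy k hk j hj).2 hyx, Nat.card_Ioc, add_sq]
    omega

lemma mul_pow_ne_intCast_of_frequently_Ccount_ne {d : ℕ → ℕ} (hdpos : ∀ n, 1 ≤ n → 0 < d n)
    {x : ℝ} (h : ∃ᶠ n in atTop, ∃ᶠ y in 𝓝 x, Ccount d y n ≠ 0 ∧ Ccount d y n ≠ 2 * n + 1)
    (t : ℕ) (c : ℤ) : x * 10 ^ t ≠ c := by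
  intro hc
  obtain ⟨n, hn, htn⟩ := (h.and_eventually (eventually_ge_atTop t)).exists
  obtain ⟨y, hne, hy⟩ := (hn.and_eventually (Ccount_eventually_eq_zero_or_eq hdpos hc htn)).exists
  exact hy.elim hne.1 hne.2

theorem stmt10_general (d : ℕ → ℕ) (hdpos : ∀ n, 1 ≤ n → 0 < d n)
    (ε α : ℝ) (N : ℕ) (B : ℕ → ℕ)
    (hα1 : 1 / 2 < α) :
    IsClosed {x : ℝ | x ∈ Set.Ioo (0 : ℝ) 1 ∧
      (∀ k, 1 ≤ k → k ≤ N ^ 2 → mdigit d k x = B k) ∧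
      ∀ n : ℕ, N ≤ n →
        1 - ε / (n : ℝ) ^ α ≤ (Ccount d x n : ℝ) / (2 * n + 1) ∧
        (Ccount d x n : ℝ) / (2 * n + 1) < 1} := by
  refine isClosed_of_closure_subset fun x hx => ?_
  have hfreq := mem_closure_iff_frequently.1 hx
  have hsmall : ∀ᶠ n : ℕ in atTop, ε / (n : ℝ) ^ α < 1 :=
    ((tendsto_rpow_atTop (by linarith)).comp tendsto_natCast_atTop_atTop).const_div_atTop ε
      |>.eventually (gt_mem_nhds one_pos)
  have hx_ne : ∀ (t : ℕ) (c : ℤ), x * 10 ^ t ≠ c := by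
    refine mul_pow_ne_intCast_of_frequently_Ccount_ne hdpos (Eventually.frequently ?_)
    filter_upwards [eventually_ge_atTop N, hsmall] with n hNn hn
    refine hfreq.mono fun y ⟨_, _, hy⟩ => ⟨fun h0 => ?_, fun hfull => ?_⟩
    · have := (hy n hNn).1
      rw [h0, Nat.cast_zero, zero_div] at this
      linarith
    · have := (hy n hNn).2
      rw [hfull, Nat.cast_add, Nat.cast_mul, Nat.cast_ofNat, Nat.cast_one,
        div_self (by positivity)] at this
      exact this.false
  have hIcc : x ∈ Set.Icc (0 : ℝ) 1 := by
    rw [← closure_Ioo zero_ne_one]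
    exact closure_mono (fun y hy => hy.1) hx
  refine ⟨⟨hIcc.1.lt_of_ne ?_, hIcc.2.lt_of_ne ?_⟩, fun k hk hkN => ?_, fun n hn => ?_⟩
  · simpa using (hx_ne 0 0).symm
  · simpa using hx_ne 0 1
  · obtain ⟨y, ⟨_, hy, _⟩, hxy⟩ := (hfreq.and_eventually (mdigit_eventually_eq d k hx_ne)).exists
    exact hxy ▸ hy k hk hkN
  · obtain ⟨y, ⟨_, _, hy⟩, hxy⟩ := (hfreq.and_eventually (Ccount_eventually_eq d n hx_ne)).exists
    exact hxy ▸ hy n hn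

theorem stmt10 (d : ℕ → ℕ) (hdpos : ∀ n, 1 ≤ n → 0 < d n)
    (hdmono : ∀ n, 1 ≤ n → d n < d (n + 1))
    (ε α : ℝ) (N : ℕ) (B : ℕ → ℕ)
    (hε : 0 < ε) (hα1 : 1 / 2 < α) (hα2 : α < 1)
    (hN : (N : ℝ) > max ((1 + ε) ^ (1 / α)) (ε ^ (1 / (α - 1))))
    (hB : ∀ k, 1 ≤ k → k ≤ N ^ 2 → B k ≤ 10 ^ (d k) - 1) :
    IsClosed {x : ℝ | x ∈ Set.Ioo (0 : ℝ) 1 ∧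
      (∀ k, 1 ≤ k → k ≤ N ^ 2 → mdigit d k x = B k) ∧
      ∀ n : ℕ, N ≤ n →
        1 - ε / (n : ℝ) ^ α ≤ (Ccount d x n : ℝ) / (2 * n + 1) ∧
        (Ccount d x n : ℝ) / (2 * n + 1) < 1} :=
  stmt10_general d hdpos ε α N B hα1
end

section
/- Let g ∈ G₃ (so g:[0,δ)→(0,∞) is increasing, continuous, g(0)=0, g(x)<x for x∈(0,δ)) and let F be a nonempty family of nonempty closed subsets of ℝ such that for every F ∈ 𝔽 and every open G ⊆ ℝ with F ∩ G ≠ ∅ there exists F* ∈ 𝔽 with F* ⊆ F ∩ G and such that F is left-[g]-porous at no point of F*. Then no member of 𝔽 is σ-left-[g]-porous (i.e. no member is a countable union of left-[g]-porous sets). -/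
/-- `M` is left-`[g]`-porous at `x`. -/
def LeftPorousAt (g : ℝ → ℝ) (M : Set ℝ) (x : ℝ) : Prop :=
  ∃ a : ℕ → ℝ, StrictAnti a ∧ (∀ n, 0 < a n) ∧
    Filter.Tendsto a Filter.atTop (nhds 0) ∧
    ∀ n, Set.Ioo (x - a n) (x - g (a n)) ∩ M = ∅

/-- Foran's lemma for left-`[g]`-porosity. -/
theorem stmt14 (δ : ℝ) (g : ℝ → ℝ)
    (hδ : 0 < δ)
    (hmono : StrictMonoOn g (Set.Ico 0 δ))
    (hcont : ContinuousOn g (Set.Ico 0 δ))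
    (hg0 : g 0 = 0)
    (hgpos : ∀ t ∈ Set.Ioo 0 δ, 0 < g t)
    (hglt : ∀ t ∈ Set.Ioo 0 δ, g t < t)
    (𝔽 : Set (Set ℝ)) (h𝔽ne : 𝔽.Nonempty)
    (hmem : ∀ F ∈ 𝔽, F.Nonempty ∧ IsClosed F)
    (hforan : ∀ F ∈ 𝔽, ∀ G : Set ℝ, IsOpen G → (F ∩ G).Nonempty →
      ∃ F' ∈ 𝔽, F' ⊆ F ∩ G ∧ ∀ x ∈ F', ¬ LeftPorousAt g F x) :
    ∀ F ∈ 𝔽, ¬ ∃ A : ℕ → Set ℝ,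
      (∀ n, ∀ x ∈ A n, LeftPorousAt g (A n) x) ∧ F = ⋃ n, A n := by
  rintro F hF ⟨A, hA, hFU⟩
  -- key step: from any member of 𝔽 we can pass to a smaller member avoiding `A n`
  have step : ∀ n : ℕ, ∀ Fn ∈ 𝔽, ∃ F', F' ∈ 𝔽 ∧ F' ⊆ Fn ∧ F' ∩ A n = ∅ := by
    intro n Fn hFn
    obtain ⟨Fs, hFs𝔽, hFssub, hnp⟩ :=
      hforan Fn hFn Set.univ isOpen_univ (by simpa using (hmem Fn hFn).1)
    by_cases hcase : (Fs ∩ A n).Nonempty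
    · obtain ⟨x, hxFs, hxA⟩ := hcase
      obtain ⟨a, haanti, hapos, hatend, hagap⟩ := hA n x hxA
      have hex : ∃ k, (Fn ∩ Set.Ioo (x - a k) (x - g (a k))).Nonempty := by
        by_contra h
        push_neg at h
        exact hnp x hxFs ⟨a, haanti, hapos, hatend, fun k => by
          rw [Set.inter_comm]; exact h k⟩
      obtain ⟨k, hk⟩ := hex
      obtain ⟨F', hF'𝔽, hF'sub, -⟩ :=
        hforan Fn hFn (Set.Ioo (x - a k) (x - g (a k))) isOpen_Ioo hk
      refine ⟨F', hF'𝔽, fun y hy => (hF'sub hy).1, ?_⟩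
      have hsub2 : F' ∩ A n ⊆ Set.Ioo (x - a k) (x - g (a k)) ∩ A n :=
        Set.inter_subset_inter_left _ (fun y hy => (hF'sub hy).2)
      rw [hagap k] at hsub2
      exact Set.subset_empty_iff.mp hsub2
    · exact ⟨Fs, hFs𝔽, fun y hy => (hFssub hy).1,
        Set.not_nonempty_iff_eq_empty.mp hcase⟩
  -- first, pass to a bounded member
  obtain ⟨x₀, hx₀⟩ := (hmem F hF).1
  obtain ⟨F₀, hF₀𝔽, hF₀sub, -⟩ :=
    hforan F hF (Set.Ioo (x₀ - 1) (x₀ + 1)) isOpen_Ioo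
      ⟨x₀, hx₀, by constructor <;> linarith⟩
  choose nxt h1 h2 h3 using step
  set seq : ℕ → {S : Set ℝ // S ∈ 𝔽} :=
    fun n => Nat.rec ⟨F₀, hF₀𝔽⟩ (fun k ih => ⟨nxt k ih.1 ih.2, h1 k ih.1 ih.2⟩) n
    with hseq
  have hsub : ∀ n, (seq (n + 1)).1 ⊆ (seq n).1 := fun n => h2 n (seq n).1 (seq n).2
  have hdisj : ∀ n, (seq (n + 1)).1 ∩ A n = ∅ := fun n => h3 n (seq n).1 (seq n).2
  have hsub0 : ∀ n, (seq n).1 ⊆ F₀ := by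
    intro n
    induction n with
    | zero => exact Set.Subset.rfl
    | succ k ih => exact (hsub k).trans ih
  have hcl : ∀ n, IsClosed (seq n).1 := fun n => (hmem _ (seq n).2).2
  have hne : ∀ n, (seq n).1.Nonempty := fun n => (hmem _ (seq n).2).1
  have hcompact : IsCompact (seq 0).1 := by
    refine Metric.isCompact_of_isClosed_isBounded (hcl 0) ?_
    exact (Metric.isBounded_Ioo (x₀ - 1) (x₀ + 1)).subset
      (fun y hy => (hF₀sub (hsub0 0 hy)).2)
  obtain ⟨x, hx⟩ :=
    IsCompact.nonempty_iInter_of_sequence_nonempty_isCompact_isClosed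
      (fun n => (seq n).1) hsub hne hcompact hcl
  have hxmem : ∀ n, x ∈ (seq n).1 := Set.mem_iInter.mp hx
  have hxF : x ∈ F := (hF₀sub (hsub0 0 (hxmem 0))).1
  rw [hFU] at hxF
  obtain ⟨m, hm⟩ := Set.mem_iUnion.mp hxF
  have : x ∈ (seq (m + 1)).1 ∩ A m := ⟨hxmem (m + 1), hm⟩
  rw [hdisj m] at this
  exact this
end
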